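/- arXiv:math/0207236 — 7 statements merged into one kernel-verified Lean document; each statement's English description precedes it below -/
import Mathlib

section
/- For every integer p ≥ 0 and every real k > 0, the sum ∑_{n=0}^{p} (-1)^n (k+n)! p! (2k+p)! / (k (p-n)! n! (2k+n)! (k-1+p)!) equals 1. Equivalently, in terms of the Gamma function: ∑_{n=0}^{p} (-1)^n Γ(k+n+1) Γ(p+1) Γ(2k+p+1) / (k Γ(p-n+1) Γ(n+1) Γ(2k+n+1) Γ(k+p)) = 1. -/
open Finset


lemma diff_sum (p : ℕ) (a : ℕ → ℝ) :
    ∑ n ∈ range (p + 2), (-1:ℝ)^n * ((p+1).choose n) * a n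
    = ∑ n ∈ range (p + 1), (-1:ℝ)^n * (p.choose n) * (a n - a (n+1)) := by
  have h3 : ∑ m ∈ range (p+2), (-1:ℝ)^m * (p.choose m : ℝ) * a m
      = ∑ m ∈ range (p+1), (-1:ℝ)^m * (p.choose m : ℝ) * a m := by
    rw [Finset.sum_range_succ]
    simp [Nat.choose_eq_zero_of_lt]
  have h2 : ∑ i ∈ range (p+1), (-1:ℝ)^i * (p.choose (i+1) : ℝ) * a (i+1)
      = a 0 - ∑ m ∈ range (p+1), (-1:ℝ)^m * (p.choose m : ℝ) * a m := by
    rw [← h3, Finset.sum_range_succ' (fun m => (-1:ℝ)^m * (p.choose m : ℝ) * a m) (p+1)]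
    simp [pow_succ]
  rw [Finset.sum_range_succ' _ (p+1)]
  simp only [Nat.choose_succ_succ, Nat.cast_add, Nat.choose_zero_right, Nat.cast_one, pow_zero,
    one_mul, mul_one]
  have expand : ∀ i, (-1:ℝ)^(i+1) * ((p.choose i : ℝ) + (p.choose (i+1) : ℝ)) * a (i+1)
      = -((-1:ℝ)^i * (p.choose i : ℝ) * a (i+1)) + -((-1:ℝ)^i * (p.choose (i+1) : ℝ) * a (i+1)) := by
    intro i; ring
  rw [Finset.sum_congr rfl (fun i _ => expand i), Finset.sum_add_distrib,
    Finset.sum_neg_distrib, Finset.sum_neg_distrib, h2]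
  simp only [mul_sub]
  rw [Finset.sum_sub_distrib]
  ring

lemma aux (k : ℝ) (hk : 0 < k) : ∀ (p j : ℕ),
    ∑ n ∈ range (p + 1), (-1:ℝ)^n * (p.choose n) *
        (Real.Gamma (k + n + 1) / Real.Gamma (2*k + j + n + 1))
    = Real.Gamma (k + j + p) / Real.Gamma (k + j) *
        (Real.Gamma (k + 1) / Real.Gamma (2*k + j + p + 1)) := by
  intro p
  induction p with
  | zero =>
    intro j
    have h : Real.Gamma (k + j) ≠ 0 :=
      (Real.Gamma_pos_of_pos (by positivity)).ne'
    simp [div_self h]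
  | succ q ih =>
    intro j
    have key : ∀ n : ℕ,
        Real.Gamma (k + n + 1) / Real.Gamma (2*k + j + n + 1)
          - Real.Gamma (k + (n+1 : ℕ) + 1) / Real.Gamma (2*k + j + (n+1 : ℕ) + 1)
        = (k + j) * (Real.Gamma (k + n + 1) / Real.Gamma (2*k + (j+1 : ℕ) + n + 1)) := by
      intro n
      push_cast
      have h1 : Real.Gamma (k + n + 1 + 1) = (k + n + 1) * Real.Gamma (k + n + 1) :=
        Real.Gamma_add_one (by positivity)
      have h2 : Real.Gamma (2*k + j + n + 1 + 1) = (2*k + j + n + 1) * Real.Gamma (2*k + j + n + 1) :=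
        Real.Gamma_add_one (by positivity)
      have hg1 : Real.Gamma (2*k + j + n + 1) ≠ 0 := (Real.Gamma_pos_of_pos (by positivity)).ne'
      have e1 : k + (n + 1) + 1 = k + n + 1 + 1 := by ring
      have e2 : 2*k + j + (n + 1) + 1 = 2*k + j + n + 1 + 1 := by ring
      have e3 : 2*k + (j + 1) + n + 1 = 2*k + j + n + 1 + 1 := by ring
      rw [e1, e2, e3, h1, h2]
      have hd : (2*k + (j:ℝ) + n + 1) ≠ 0 := by positivity
      field_simp
      ring
    have step := diff_sum q (fun n => Real.Gamma (k + n + 1) / Real.Gamma (2*k + j + n + 1))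
    rw [show q + 1 + 1 = q + 2 from rfl, step]
    simp only [key]
    have pull : ∑ n ∈ range (q+1), (-1:ℝ)^n * (q.choose n) *
        ((k + j) * (Real.Gamma (k + n + 1) / Real.Gamma (2*k + (j+1 : ℕ) + n + 1)))
        = (k + j) * ∑ n ∈ range (q+1), (-1:ℝ)^n * (q.choose n) *
        (Real.Gamma (k + n + 1) / Real.Gamma (2*k + (j+1 : ℕ) + n + 1)) := by
      rw [Finset.mul_sum]; apply Finset.sum_congr rfl; intro i _; ring
    rw [pull, ih (j+1)]
    have hgj : Real.Gamma (k + j) ≠ 0 := (Real.Gamma_pos_of_pos (by positivity)).ne'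
    have hgj1 : Real.Gamma (k + (j:ℝ) + 1) = (k + j) * Real.Gamma (k + j) :=
      Real.Gamma_add_one (by positivity)
    push_cast
    have e4 : k + ((j:ℝ) + 1) + q = k + j + (q + 1) := by ring
    have e5 : 2*k + ((j:ℝ) + 1) + q + 1 = 2*k + j + (q + 1) + 1 := by ring
    have e6 : k + ((j:ℝ) + 1) = k + j + 1 := by ring
    rw [e4, e5, e6, hgj1]
    have hkj : (k + (j:ℝ)) ≠ 0 := by positivity
    field_simp

/-- The Wilf–Zeilberger summation identity: for every integer `p ≥ 0` and real `k > 0`,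
`∑_{n=0}^{p} (-1)^n Γ(k+n+1) Γ(p+1) Γ(2k+p+1) / (k Γ(p-n+1) Γ(n+1) Γ(2k+n+1) Γ(k+p)) = 1`. -/
theorem wz_sum_eq_one (p : ℕ) (k : ℝ) (hk : 0 < k) :
    ∑ n ∈ Finset.range (p + 1),
      (-1 : ℝ) ^ n * Real.Gamma (k + n + 1) * Real.Gamma (p + 1) * Real.Gamma (2 * k + p + 1) /
        (k * Real.Gamma ((p : ℝ) - n + 1) * Real.Gamma (n + 1) * Real.Gamma (2 * k + n + 1) *
          Real.Gamma (k + p)) = 1 := by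
  have hkp : Real.Gamma (k + p) ≠ 0 := (Real.Gamma_pos_of_pos (by positivity)).ne'
  have hterm : ∀ n ∈ Finset.range (p + 1),
      (-1 : ℝ) ^ n * Real.Gamma (k + n + 1) * Real.Gamma (p + 1) * Real.Gamma (2 * k + p + 1) /
        (k * Real.Gamma ((p : ℝ) - n + 1) * Real.Gamma (n + 1) * Real.Gamma (2 * k + n + 1) *
          Real.Gamma (k + p))
      = ((-1:ℝ)^n * (p.choose n) * (Real.Gamma (k + n + 1) / Real.Gamma (2*k + (0:ℕ) + n + 1)))
          * (Real.Gamma (2 * k + p + 1) / (k * Real.Gamma (k + p))) := by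
    intro n hn
    have hn' : n ≤ p := Nat.lt_succ_iff.mp (Finset.mem_range.mp hn)
    have hpn : (p : ℝ) - n = ((p - n : ℕ) : ℝ) := by
      rw [Nat.cast_sub hn']
    rw [hpn]
    rw [Real.Gamma_nat_eq_factorial, Real.Gamma_nat_eq_factorial, Real.Gamma_nat_eq_factorial]
    have hch : ((p.choose n : ℝ)) = p.factorial / (n.factorial * (p - n).factorial) :=
      Nat.cast_choose ℝ hn'
    have hgn : Real.Gamma (2*k + n + 1) ≠ 0 := (Real.Gamma_pos_of_pos (by positivity)).ne'
    have hf1 : ((p-n).factorial : ℝ) ≠ 0 := by positivity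
    have hf2 : ((n).factorial : ℝ) ≠ 0 := by positivity
    rw [hch]
    push_cast
    have h0 : (2:ℝ)*k + 0 + n + 1 = 2*k + n + 1 := by ring
    rw [h0]
    field_simp
  rw [Finset.sum_congr rfl hterm, ← Finset.sum_mul, aux k hk p 0]
  have hgk : Real.Gamma k ≠ 0 := (Real.Gamma_pos_of_pos hk).ne'
  have hg2 : Real.Gamma (2*k + p + 1) ≠ 0 := (Real.Gamma_pos_of_pos (by positivity)).ne'
  have hk1 : Real.Gamma (k + 1) = k * Real.Gamma k := Real.Gamma_add_one hk.ne'
  push_cast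
  simp only [add_zero]
  rw [hk1]
  field_simp
end

section
/- For every integer p ≥ 0 and integer k ≥ 1, ∑_{n=0}^{p} (-1)^{p-n} (k+n)! (k+p)! / ((p-n)! n! (2k+n)! (2k+2p+1)!) = (-1)^p k (k-1+p)! (k+p)! / (p! (2k+p)! (2k+1+2p)!). -/
open Finset Nat

/-!
Up to the factor `(k + p)! / (p! (2k + 2p + 1)!)`, the left side is the `p`-th forward difference
at `a = k` of `a ↦ a! / (a + k)!`. One difference step turns `a! / (a + m + 1)!` into
`-(m + 1) · a! / (a + m + 2)!`, so `p` steps give `(-1)^p (m + p)! / m! · a! / (a + m + p + 1)!`;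
with `m = k - 1` this is the right side.
-/

section

variable {K : Type*} [Field K] [CharZero K]

lemma fwdDiff_factorial_div_factorial (m : ℕ) :
    fwdDiff 1 (fun a : ℕ ↦ (a ! : K) / (a + m + 1)!) =
      (-(m + 1) : K) • fun a : ℕ ↦ (a ! : K) / (a + (m + 1) + 1)! := by
  ext a
  have h : a + 1 + m + 1 = a + (m + 1) + 1 := by ring
  simp only [fwdDiff, Pi.smul_apply, smul_eq_mul, h, factorial_succ (a + m + 1),
    factorial_succ a, ← add_assoc]
  have := cast_add_one_ne_zero (R := K) (a + m + 1)
  push_cast at *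
  field_simp
  ring

lemma fwdDiff_iter_factorial_div_factorial (m p : ℕ) :
    (fwdDiff 1)^[p] (fun a : ℕ ↦ (a ! : K) / (a + m + 1)!) =
      ((-1) ^ p * (m + p)! / m ! : K) • fun a : ℕ ↦ (a ! : K) / (a + (m + p) + 1)! := by
  induction p generalizing m with
  | zero => simp [(factorial_pos m).ne']
  | succ p ih =>
    rw [Function.iterate_succ_apply, fwdDiff_factorial_div_factorial, fwdDiff_iter_const_smul,
      ih, smul_smul, add_right_comm m 1 p, factorial_succ m]
    congr 1
    have := cast_add_one_ne_zero (R := K) m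
    push_cast
    field_simp
    rw [pow_succ, ← add_assoc]
    ring

end

/-- For every integer `p ≥ 0` and integer `k ≥ 1`,
`∑_{n=0}^{p} (-1)^{p-n} (k+n)! (k+p)! / ((p-n)! n! (2k+n)! (2k+2p+1)!)
  = (-1)^p k (k-1+p)! (k+p)! / (p! (2k+p)! (2k+1+2p)!)`. -/
theorem coeff_identity (p k : ℕ) (hk : 1 ≤ k) :
    ∑ n ∈ Finset.range (p + 1),
      (-1 : ℚ) ^ (p - n) * (k + n)! * (k + p)! /
        ((p - n)! * n ! * (2 * k + n)! * (2 * k + 2 * p + 1)!)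
    = (-1 : ℚ) ^ p * k * (k - 1 + p)! * (k + p)! /
        (p ! * (2 * k + p)! * (2 * k + 1 + 2 * p)!) := by
  obtain ⟨m, rfl⟩ := exists_add_of_le hk
  calc _ = (1 + m + p)! / (p ! * (2 * (1 + m) + 2 * p + 1)! : ℚ) *
        (fwdDiff 1)^[p] (fun a : ℕ ↦ (a ! : ℚ) / (a + m + 1)!) (1 + m) := by
        rw [fwdDiff_iter_eq_sum_shift, mul_sum]
        refine sum_congr rfl fun n hn => ?_
        have hnp : n ≤ p := Nat.lt_succ_iff.mp (mem_range.mp hn)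
        have h : 1 + m + n + m + 1 = 2 * (1 + m) + n := by ring
        simp only [zsmul_eq_mul, smul_eq_mul, mul_one, h]
        push_cast
        rw [cast_choose ℚ hnp]
        field_simp
    _ = _ := by
        have h₁ : 1 + m + (m + p) + 1 = 2 * (1 + m) + p := by ring
        have h₂ : 2 * (1 + m) + 2 * p + 1 = 2 * (1 + m) + 1 + 2 * p := by ring
        rw [fwdDiff_iter_factorial_div_factorial (K := ℚ), Pi.smul_apply, smul_eq_mul, h₁, h₂,
          add_tsub_cancel_left, add_comm 1 m, factorial_succ]
        push_cast
        field_simp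
end

section
/- Define F_k(y) = k ∑_{p=0}^∞ (-1)^p (k-1+p)!(k+p)! / (p! (2k+p)! (2k+1+2p)!) y^{2k+2p} for integer k ≥ 1. Then F_1(2x) = (x² − sin²x)/x² for all real x ≠ 0. -/
open Nat

/-- `F_k(y) = k ∑_{p≥0} (-1)^p (k-1+p)!(k+p)! / (p! (2k+p)! (2k+1+2p)!) y^{2k+2p}`. -/
noncomputable def Fk (k : ℕ) (y : ℝ) : ℝ :=
  (k : ℝ) * ∑' p : ℕ,
    (-1 : ℝ) ^ p * (k - 1 + p)! * (k + p)! /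
      (p ! * (2 * k + p)! * (2 * k + 1 + 2 * p)!) * y ^ (2 * k + 2 * p)

/-- `F_1(2x) = (x² − sin²x)/x²` for all real `x ≠ 0`. -/
theorem F_one_eq (x : ℝ) (hx : x ≠ 0) :
    Fk 1 (2 * x) = (x ^ 2 - Real.sin x ^ 2) / x ^ 2 := by
  have hc := Real.hasSum_cos (2 * x)
  set f : ℕ → ℝ := fun n : ℕ => (-1) ^ n * (2 * x) ^ (2 * n) / ↑(2 * n)! with hf
  have h2 : HasSum (fun n : ℕ => f (n + 2))
      (Real.cos (2 * x) - ∑ i ∈ Finset.range 2, f i) :=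
    ((hasSum_nat_add_iff' 2).mpr hc)
  have h3 : HasSum (fun n : ℕ => f (n + 2) / (2 * x ^ 2))
      ((Real.cos (2 * x) - ∑ i ∈ Finset.range 2, f i) / (2 * x ^ 2)) :=
    h2.div_const _
  have hsum : ∑ i ∈ Finset.range 2, f i = 1 - 2 * x ^ 2 := by
    simp [hf, Finset.sum_range_succ, Nat.factorial]
    ring
  rw [hsum] at h3
  have hterm : ∀ p : ℕ,
      (-1 : ℝ) ^ p * ((1 : ℕ) - 1 + p)! * ((1 : ℕ) + p)! /
        (p ! * (2 * 1 + p)! * (2 * 1 + 1 + 2 * p)!) * (2 * x) ^ (2 * 1 + 2 * p)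
      = f (p + 2) / (2 * x ^ 2) := by
    intro p
    have e1 : (2 * (p + 2))! = (2 * (p + 2)) * (2 * p + 3)! := by
      have : 2 * (p + 2) = (2 * p + 3) + 1 := by ring
      rw [this, Nat.factorial_succ]
    have e2 : (2 + p)! = (2 + p) * (1 + p)! := by
      have : 2 + p = (1 + p) + 1 := by ring
      rw [this, Nat.factorial_succ]
    have hfac1 : ((2 * p + 3)! : ℝ) ≠ 0 := by positivity
    have hfac2 : ((1 + p)! : ℝ) ≠ 0 := by positivity
    have hfac3 : ((p)! : ℝ) ≠ 0 := by positivity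
    simp only [hf]
    have : (1 : ℕ) - 1 + p = p := by omega
    rw [this]
    have h21 : 2 * 1 + p = 2 + p := by ring
    have h22 : 2 * 1 + 1 + 2 * p = 2 * p + 3 := by ring
    rw [h21, h22]
    rw [e1, e2]
    push_cast
    have hpow : (2 * x) ^ (2 * (p + 2)) = (2 * x) ^ (2 * 1 + 2 * p) * (4 * x ^ 2) := by
      have h4 : 2 * (p + 2) = (2 * 1 + 2 * p) + 2 := by ring
      rw [h4, pow_add]; ring
    rw [hpow]
    field_simp
    ring
  have hFsum : HasSum (fun p : ℕ =>
      (-1 : ℝ) ^ p * ((1 : ℕ) - 1 + p)! * ((1 : ℕ) + p)! /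
        (p ! * (2 * 1 + p)! * (2 * 1 + 1 + 2 * p)!) * (2 * x) ^ (2 * 1 + 2 * p))
      ((Real.cos (2 * x) - (1 - 2 * x ^ 2)) / (2 * x ^ 2)) := by
    exact (funext hterm ▸ h3 : _)
  have hx2 : x ^ 2 ≠ 0 := pow_ne_zero 2 hx
  rw [Fk, hFsum.tsum_eq]
  have hcos : Real.cos (2 * x) = 1 - 2 * Real.sin x ^ 2 := by
    have := Real.sin_sq_add_cos_sq x
    have := Real.cos_two_mul x
    nlinarith
  rw [hcos]
  push_cast
  field_simp
  ring
end

section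
/- Define F_2(2x) = 2 ∑_{p=0}^∞ (-1)^p (1+p)!(2+p)! / (p! (4+p)! (5+2p)!) (2x)^{4+2p}. Then F_2(2x) = (x⁴ − 3x² + 3x sin(2x) + (2x² − 3) sin²(x)) / x⁴ for all real x ≠ 0. -/
open Nat

lemma fact_aux (p : ℕ) :
    ((1 + p)! * (2 + p)! : ℝ) / (p ! * (4 + p)! * (5 + 2 * p)!) =
      2 / (2 * p + 6)! - 12 / (2 * p + 7)! + 12 / (2 * p + 8)! := by
  have e1 : (1 + p)! = (1 + p) * p ! := by rw [add_comm]; exact Nat.factorial_succ p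
  have e2 : (2 + p)! = (2 + p) * (1 + p)! := by
    rw [show 2 + p = (1 + p) + 1 from by ring]; exact Nat.factorial_succ _
  have e3 : (3 + p)! = (3 + p) * (2 + p)! := by
    rw [show 3 + p = (2 + p) + 1 from by ring]; exact Nat.factorial_succ _
  have e4 : (4 + p)! = (4 + p) * (3 + p)! := by
    rw [show 4 + p = (3 + p) + 1 from by ring]; exact Nat.factorial_succ _
  have f6 : (2 * p + 6)! = (2 * p + 6) * (5 + 2 * p)! := by
    rw [show 2 * p + 6 = (5 + 2 * p) + 1 from by ring]; exact Nat.factorial_succ _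
  have f7 : (2 * p + 7)! = (2 * p + 7) * (2 * p + 6)! := by
    rw [show 2 * p + 7 = (2 * p + 6) + 1 from by ring]; exact Nat.factorial_succ _
  have f8 : (2 * p + 8)! = (2 * p + 8) * (2 * p + 7)! := by
    rw [show 2 * p + 8 = (2 * p + 7) + 1 from by ring]; exact Nat.factorial_succ _
  rw [e4, e3, e2, e1, f8, f7, f6]
  have h0 : (p ! : ℝ) ≠ 0 := Nat.cast_ne_zero.mpr (Nat.factorial_ne_zero _)
  have h5 : ((5 + 2 * p)! : ℝ) ≠ 0 := Nat.cast_ne_zero.mpr (Nat.factorial_ne_zero _)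
  push_cast
  have a1 : (1 + (p : ℝ)) ≠ 0 := by positivity
  have a2 : (2 + (p : ℝ)) ≠ 0 := by positivity
  have a3 : (3 + (p : ℝ)) ≠ 0 := by positivity
  have a4 : (4 + (p : ℝ)) ≠ 0 := by positivity
  have b6 : (2 * (p : ℝ) + 6) ≠ 0 := by positivity
  have b7 : (2 * (p : ℝ) + 7) ≠ 0 := by positivity
  have b8 : (2 * (p : ℝ) + 8) ≠ 0 := by positivity
  field_simp
  ring

/-- `F_2(2x) = 2 ∑_{p≥0} (-1)^p (1+p)!(2+p)! / (p!(4+p)!(5+2p)!) (2x)^{4+2p}` equals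
`(x⁴ − 3x² + 3x sin(2x) + (2x² − 3) sin²x)/x⁴` for all real `x ≠ 0`. -/
theorem F_two_eq (x : ℝ) (hx : x ≠ 0) :
    2 * ∑' p : ℕ,
      (-1 : ℝ) ^ p * (1 + p)! * (2 + p)! / (p ! * (4 + p)! * (5 + 2 * p)!) * (2 * x) ^ (4 + 2 * p)
    = (x ^ 4 - 3 * x ^ 2 + 3 * x * Real.sin (2 * x) + (2 * x ^ 2 - 3) * Real.sin x ^ 2) /
        x ^ 4 := by
  have ht : (2 * x) ≠ 0 := mul_ne_zero two_ne_zero hx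
  have hc := Real.hasSum_cos (2 * x)
  have hs := Real.hasSum_sin (2 * x)
  -- shifted cosine series (by 3)
  have hc3 := (hasSum_nat_add_iff'
      (f := fun n : ℕ => (-1 : ℝ) ^ n * (2 * x) ^ (2 * n) / (2 * n)!) 3).mpr hc
  have hS3 : ∑ i ∈ Finset.range 3, ((-1 : ℝ) ^ i * (2 * x) ^ (2 * i) / (2 * i)!)
      = 1 - (2 * x) ^ 2 / 2 + (2 * x) ^ 4 / 24 := by
    norm_num [Finset.sum_range_succ, Nat.factorial]
    ring
  rw [hS3] at hc3
  -- shifted sine series (by 3)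
  have hs3 := (hasSum_nat_add_iff'
      (f := fun n : ℕ => (-1 : ℝ) ^ n * (2 * x) ^ (2 * n + 1) / (2 * n + 1)!) 3).mpr hs
  have hT3 : ∑ i ∈ Finset.range 3, ((-1 : ℝ) ^ i * (2 * x) ^ (2 * i + 1) / (2 * i + 1)!)
      = (2 * x) - (2 * x) ^ 3 / 6 + (2 * x) ^ 5 / 120 := by
    norm_num [Finset.sum_range_succ, Nat.factorial]
    ring
  rw [hT3] at hs3
  -- shifted cosine series (by 4)
  have hc4 := (hasSum_nat_add_iff'
      (f := fun n : ℕ => (-1 : ℝ) ^ n * (2 * x) ^ (2 * n) / (2 * n)!) 4).mpr hc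
  have hS4 : ∑ i ∈ Finset.range 4, ((-1 : ℝ) ^ i * (2 * x) ^ (2 * i) / (2 * i)!)
      = 1 - (2 * x) ^ 2 / 2 + (2 * x) ^ 4 / 24 - (2 * x) ^ 6 / 720 := by
    norm_num [Finset.sum_range_succ, Nat.factorial]
    ring
  rw [hS4] at hc4
  -- combine
  have hcomb := ((hc3.mul_left (-2 / (2 * x) ^ 2)).add
      (hs3.mul_left (12 / (2 * x) ^ 3))).add (hc4.mul_left (12 / (2 * x) ^ 4))
  have hfun : (fun p : ℕ =>
        -2 / (2 * x) ^ 2 * ((-1 : ℝ) ^ (p + 3) * (2 * x) ^ (2 * (p + 3)) / (2 * (p + 3))!)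
        + 12 / (2 * x) ^ 3 * ((-1 : ℝ) ^ (p + 3) * (2 * x) ^ (2 * (p + 3) + 1) / (2 * (p + 3) + 1)!)
        + 12 / (2 * x) ^ 4 * ((-1 : ℝ) ^ (p + 4) * (2 * x) ^ (2 * (p + 4)) / (2 * (p + 4))!))
      = fun p : ℕ =>
        (-1 : ℝ) ^ p * (1 + p)! * (2 + p)! / (p ! * (4 + p)! * (5 + 2 * p)!)
          * (2 * x) ^ (4 + 2 * p) := by
    funext p
    have h6 : 2 * (p + 3) = 2 * p + 6 := by ring
    have h7 : 2 * (p + 3) + 1 = 2 * p + 7 := by ring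
    have h8 : 2 * (p + 4) = 2 * p + 8 := by ring
    rw [h7, h6, h8]
    have hA : (-1 : ℝ) ^ p * (1 + p)! * (2 + p)! / (p ! * (4 + p)! * (5 + 2 * p)!)
          * (2 * x) ^ (4 + 2 * p)
        = (-1 : ℝ) ^ p * (((1 + p)! * (2 + p)! : ℝ) / (p ! * (4 + p)! * (5 + 2 * p)!))
          * (2 * x) ^ (4 + 2 * p) := by ring
    rw [hA, fact_aux p]
    have p4 : (2 * x) ^ (4 + 2 * p) = (2 * x) ^ 4 * (2 * x) ^ (2 * p) := pow_add _ 4 (2 * p)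
    have p6 : (2 * x) ^ (2 * p + 6) = (2 * x) ^ (2 * p) * (2 * x) ^ 6 := pow_add _ (2 * p) 6
    have p7 : (2 * x) ^ (2 * p + 7) = (2 * x) ^ (2 * p) * (2 * x) ^ 7 := pow_add _ (2 * p) 7
    have p8 : (2 * x) ^ (2 * p + 8) = (2 * x) ^ (2 * p) * (2 * x) ^ 8 := pow_add _ (2 * p) 8
    have m3 : (-1 : ℝ) ^ (p + 3) = -((-1 : ℝ) ^ p) := by
      rw [pow_add]; norm_num
    have m4 : (-1 : ℝ) ^ (p + 4) = (-1 : ℝ) ^ p := by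
      rw [pow_add]; norm_num
    rw [p4, p6, p7, p8, m3, m4]
    have n6 : ((2 * p + 6)! : ℝ) ≠ 0 := Nat.cast_ne_zero.mpr (Nat.factorial_ne_zero _)
    have n7 : ((2 * p + 7)! : ℝ) ≠ 0 := Nat.cast_ne_zero.mpr (Nat.factorial_ne_zero _)
    have n8 : ((2 * p + 8)! : ℝ) ≠ 0 := Nat.cast_ne_zero.mpr (Nat.factorial_ne_zero _)
    field_simp
    ring
  rw [hfun] at hcomb
  rw [hcomb.tsum_eq, Real.sin_sq_eq_half_sub]
  field_simp
  ring
end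

section
/- For integer k ≥ 1 and real x ≠ 0, F_k(2x) = x² j_k(x)² + x² j_{k-1}(x)² − 2k x j_k(x) j_{k-1}(x), where F_k(y) = k ∑_{p=0}^∞ (-1)^p (k-1+p)!(k+p)! / (p! (2k+p)! (2k+1+2p)!) y^{2k+2p}. -/
open Nat

/-- The spherical Bessel function of the first kind, defined by its power series
`j_n(z) = ∑_{m≥0} (-1)^m (n+m)! / (m! (2n+2m+1)! 2^{2m}) (2z)^{n+2m}`. -/
noncomputable def sphBessel (n : ℕ) (z : ℝ) : ℝ :=
  ∑' m : ℕ,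
    (-1 : ℝ) ^ m * (n + m)! / (m ! * (2 * n + 2 * m + 1)! * 2 ^ (2 * m)) * (2 * z) ^ (n + 2 * m)

/-! Write `j_n(x) = ∑ a(n,m) x^(n+2m)`. The coefficients satisfy `a(n,m) = (2n+2m+3) a(n+1,m)` and
`a(n+1,m) = -2(m+1) a(n,m+1)`; the second one expands `x j_k(x)` in the powers `x^(k-1+2m)`, so that
`x j_k · x j_k`, `x j_{k-1} · x j_{k-1}` and `x j_k · j_{k-1}` are all Cauchy products of series in
`x^(2k+2p)`, and the coefficient of `x^(2k+2p)` on the right-hand side is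
`∑_{m+j=p} (2m-2j+1) a(k,m) a(k-1,j)`. Summation by parts along the antidiagonal (the coefficient
form of `d/dx RHS = 2k j_k j_{k-1}`) turns this into `k/(k+p) ∑_{m+j=p} a(k,m) a(k-1,j)`, and this
last sum, the product formula for `j_k j_{k-1}`, is evaluated by creative telescoping: it satisfies
the same first-order recurrence in `p` as the claimed closed form. -/

open Finset

lemma Finset.Nat.sum_antidiagonal_eq_of_shift {M : Type*} [AddCommMonoid M] {f g : ℕ × ℕ → M}
    (hf : ∀ j, f (0, j) = 0) (hg : ∀ i, g (i, 0) = 0) (hfg : ∀ i j, f (i + 1, j) = g (i, j + 1))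
    (n : ℕ) : ∑ p ∈ antidiagonal n, f p = ∑ p ∈ antidiagonal n, g p := by
  cases n with
  | zero => simp [hf, hg]
  | succ n =>
    rw [Finset.Nat.sum_antidiagonal_succ, Finset.Nat.sum_antidiagonal_succ']
    simp [hf, hg, hfg]

noncomputable def sphCoeff (n m : ℕ) : ℝ :=
  (-1) ^ m * (n + m)! * 2 ^ n / (m ! * (2 * n + 2 * m + 1)!)

lemma sphCoeff_eq_neg_mul_sphCoeff_succ (n m : ℕ) :
    sphCoeff n m = -2 * (m + 1) * (2 * n + 2 * m + 3) * sphCoeff n (m + 1) := by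
  have e1 : n + (m + 1) = n + m + 1 := by ring
  have e2 : 2 * n + 2 * (m + 1) + 1 = (2 * n + 2 * m + 1) + 1 + 1 := by ring
  simp only [sphCoeff, e1, e2, factorial_succ]
  push_cast
  field_simp
  ring

lemma mul_sphCoeff_succ (n m : ℕ) :
    (2 * n + 2 * m + 3) * sphCoeff (n + 1) m = sphCoeff n m := by
  have e1 : n + 1 + m = n + m + 1 := by ring
  have e2 : 2 * (n + 1) + 2 * m + 1 = (2 * n + 2 * m + 1) + 1 + 1 := by ring
  simp only [sphCoeff, e1, e2, factorial_succ]
  push_cast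
  field_simp
  ring

lemma sphCoeff_succ_eq_neg_mul (n m : ℕ) :
    sphCoeff (n + 1) m = -2 * (m + 1) * sphCoeff n (m + 1) := by
  rw [sphCoeff_eq_neg_mul_sphCoeff_succ (n + 1) m, ← mul_sphCoeff_succ n (m + 1)]
  push_cast
  ring

lemma sphCoeff_mul_sphCoeff_shift (l m j : ℕ) :
    (m + 1) * (2 * l + 2 * (m + 1) + 3) * (sphCoeff (l + 1) (m + 1) * sphCoeff l j) =
      (j + 1) * (2 * l + 2 * (j + 1) + 1) * (sphCoeff (l + 1) m * sphCoeff l (j + 1)) := by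
  have hm := mul_sphCoeff_succ l (m + 1)
  rw [sphCoeff_succ_eq_neg_mul l m, sphCoeff_eq_neg_mul_sphCoeff_succ l j, ← hm]
  push_cast
  ring

lemma sum_antidiagonal_weight_mul_sphCoeff (l N : ℕ) (w : ℕ → ℝ) :
    ∑ p ∈ antidiagonal N,
        w p.1 * (p.1 * (2 * l + 2 * p.1 + 3)) * (sphCoeff (l + 1) p.1 * sphCoeff l p.2) =
      ∑ p ∈ antidiagonal N,
        w (p.1 + 1) * (p.2 * (2 * l + 2 * p.2 + 1)) * (sphCoeff (l + 1) p.1 * sphCoeff l p.2) := by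
  apply Finset.Nat.sum_antidiagonal_eq_of_shift
  · simp
  · simp
  intro i j
  push_cast
  rw [mul_assoc, sphCoeff_mul_sphCoeff_shift, ← mul_assoc]

lemma sum_antidiagonal_sphCoeff_mul_succ (l N : ℕ) :
    (N + 1) * (2 * l + N + 3) * (2 * l + 2 * N + 3) * (2 * l + 2 * N + 5) *
        ∑ p ∈ antidiagonal (N + 1), sphCoeff (l + 1) p.1 * sphCoeff l p.2 =
      -2 * (l + N + 2) * (2 * l + 2 * N + 3) *
        ∑ p ∈ antidiagonal N, sphCoeff (l + 1) p.1 * sphCoeff l p.2 := by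
  have h_lower : ∑ p ∈ antidiagonal N, sphCoeff (l + 1) p.1 * sphCoeff l p.2 =
      -2 * ∑ p ∈ antidiagonal (N + 1),
        (p.2 * (2 * l + 2 * p.2 + 1)) * (sphCoeff (l + 1) p.1 * sphCoeff l p.2) := by
    rw [Finset.Nat.sum_antidiagonal_succ', mul_add, mul_sum]
    simp only [CharP.cast_eq_zero, zero_mul, mul_zero, zero_add]
    refine sum_congr rfl fun p _ => ?_
    rw [sphCoeff_eq_neg_mul_sphCoeff_succ l p.2]
    push_cast
    ring
  -- creative telescoping: this weight is Zeilberger's certificate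
  have h_parts := sum_antidiagonal_weight_mul_sphCoeff l (N + 1)
    (fun m => 4 * (l + N + 2) * m +
      ((N + 1) * (2 * l + 2 * N + 3) - 2 * (l + N + 2) * (2 * l + 4 * N + 5)))
  rw [h_lower, ← sub_eq_zero, ← sub_eq_zero_of_eq h_parts.symm, mul_sum, mul_sum, mul_sum,
    ← sum_sub_distrib, ← sum_sub_distrib]
  refine sum_congr rfl fun p hp => ?_
  have hj : (p.2 : ℝ) = N + 1 - p.1 := by
    rw [eq_sub_iff_add_eq, add_comm]; exact_mod_cast mem_antidiagonal.mp hp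
  push_cast
  rw [hj]
  ring

noncomputable def FkCoeff (k p : ℕ) : ℝ :=
  (-1 : ℝ) ^ p * (k - 1 + p)! * (k + p)! / (p ! * (2 * k + p)! * (2 * k + 1 + 2 * p)!)

lemma Fk_eq_tsum (k : ℕ) (y : ℝ) : Fk k y = k * ∑' p, FkCoeff k p * y ^ (2 * k + 2 * p) := rfl

lemma FkCoeff_succ (l p : ℕ) :
    2 * (p + 1) * (2 * l + p + 3) * (2 * l + 2 * p + 5) * FkCoeff (l + 1) (p + 1) =
      -(l + p + 1) * FkCoeff (l + 1) p := by
  have e1 : l + 1 - 1 + (p + 1) = (l + p) + 1 := by omega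
  have e3 : l + 1 + (p + 1) = (l + 1 + p) + 1 := by ring
  have e4 : 2 * (l + 1) + (p + 1) = (2 * (l + 1) + p) + 1 := by ring
  have e5 : 2 * (l + 1) + 1 + 2 * (p + 1) = (2 * (l + 1) + 1 + 2 * p) + 1 + 1 := by ring
  simp only [FkCoeff, e1, e3, e4, e5, factorial_succ]
  push_cast
  field_simp
  ring

lemma sum_antidiagonal_sphCoeff_mul (l N : ℕ) :
    ∑ p ∈ antidiagonal N, sphCoeff (l + 1) p.1 * sphCoeff l p.2 =
      (l + 1 + N) * 4 ^ (l + 1 + N) * FkCoeff (l + 1) N := by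
  induction N with
  | zero =>
    have e1 : 2 * (l + 1) + 2 * 0 + 1 = (2 * l + 1) + 1 + 1 := by ring
    have e2 : 2 * (l + 1) + 0 = (2 * l + 1) + 1 := by ring
    have e3 : l + 1 - 1 + 0 = l := by omega
    simp only [Finset.Nat.antidiagonal_zero, sum_singleton, sphCoeff, FkCoeff, e1, e2, e3,
      add_zero, mul_zero, factorial_succ]
    push_cast
    rw [show (4 : ℝ) = 2 ^ 2 by norm_num, ← pow_mul]
    field_simp
    ring
  | succ N ih =>
    have ha : ((N + 1) * (2 * l + N + 3) * (2 * l + 2 * N + 3) * (2 * l + 2 * N + 5) : ℝ) ≠ 0 := by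
      positivity
    apply mul_left_cancel₀ ha
    rw [sum_antidiagonal_sphCoeff_mul_succ, ih]
    push_cast
    rw [show l + 1 + (N + 1) = l + 1 + N + 1 by ring, pow_succ]
    linear_combination (-2 * (2 * l + 2 * N + 3 : ℝ) * (l + N + 2) * 4 ^ (l + 1 + N)) *
      FkCoeff_succ l N

lemma sum_antidiagonal_sphCoeff_mul_weighted (l N : ℕ) :
    ∑ p ∈ antidiagonal N, (2 * p.1 - 2 * p.2 + 1) * (sphCoeff (l + 1) p.1 * sphCoeff l p.2) =
      (l + 1) * 4 ^ (l + 1 + N) * FkCoeff (l + 1) N := by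
  have h_parts : ∑ p ∈ antidiagonal N,
        (p.1 * (2 * l + 2 * p.1 + 3)) * (sphCoeff (l + 1) p.1 * sphCoeff l p.2) =
      ∑ p ∈ antidiagonal N,
        (p.2 * (2 * l + 2 * p.2 + 1)) * (sphCoeff (l + 1) p.1 * sphCoeff l p.2) := by
    simpa only [one_mul] using sum_antidiagonal_weight_mul_sphCoeff l N (fun _ => 1)
  have hN : (l + 1 + N : ℝ) ≠ 0 := by positivity
  apply mul_left_cancel₀ hN
  calc (l + 1 + N : ℝ) * ∑ p ∈ antidiagonal N,
          (2 * p.1 - 2 * p.2 + 1) * (sphCoeff (l + 1) p.1 * sphCoeff l p.2)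
      = (l + 1) * ∑ p ∈ antidiagonal N, sphCoeff (l + 1) p.1 * sphCoeff l p.2 +
          (∑ p ∈ antidiagonal N,
              (p.1 * (2 * l + 2 * p.1 + 3)) * (sphCoeff (l + 1) p.1 * sphCoeff l p.2) -
            ∑ p ∈ antidiagonal N,
              (p.2 * (2 * l + 2 * p.2 + 1)) * (sphCoeff (l + 1) p.1 * sphCoeff l p.2)) := by
        rw [mul_sum, mul_sum, ← sum_sub_distrib, ← sum_add_distrib]
        refine sum_congr rfl fun p hp => ?_
        have hN : (N : ℝ) = p.1 + p.2 := by exact_mod_cast (mem_antidiagonal.mp hp).symm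
        rw [hN]
        ring
    _ = (l + 1 + N) * ((l + 1) * 4 ^ (l + 1 + N) * FkCoeff (l + 1) N) := by
        rw [h_parts, sub_self, add_zero, sum_antidiagonal_sphCoeff_mul]
        ring

lemma sphBessel_eq_tsum (n : ℕ) (x : ℝ) : sphBessel n x = ∑' m, sphCoeff n m * x ^ (n + 2 * m) := by
  refine tsum_congr fun m => ?_
  rw [sphCoeff, mul_pow, pow_add 2 n, pow_mul]
  field_simp

lemma abs_sphCoeff_le (n m : ℕ) : |sphCoeff n m| ≤ 2 ^ n / m ! := by
  have hfact : ((n + m)! : ℝ) ≤ (2 * n + 2 * m + 1)! := by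
    exact_mod_cast Nat.factorial_le (by omega)
  rw [sphCoeff, abs_div, abs_mul, abs_mul, abs_pow, abs_neg, abs_one, one_pow, one_mul,
    abs_of_nonneg (by positivity : (0 : ℝ) ≤ (n + m)!),
    abs_of_nonneg (by positivity : (0 : ℝ) ≤ 2 ^ n),
    abs_of_nonneg (by positivity : (0 : ℝ) ≤ m ! * (2 * n + 2 * m + 1)!),
    div_le_div_iff₀ (by positivity) (by positivity)]
  calc ((n + m)! : ℝ) * 2 ^ n * m ! ≤ (2 * n + 2 * m + 1)! * 2 ^ n * m ! := by gcongr
    _ = 2 ^ n * (m ! * (2 * n + 2 * m + 1)!) := by ring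

lemma summable_norm_sphCoeff_mul_pow (n : ℕ) (x : ℝ) :
    Summable fun m => ‖sphCoeff n m * x ^ (n + 2 * m)‖ := by
  refine .of_nonneg_of_le (fun _ => norm_nonneg _) (fun m => ?_)
    ((Real.summable_pow_div_factorial (x ^ 2)).mul_left (2 ^ n * |x| ^ n))
  rw [norm_mul, Real.norm_eq_abs, Real.norm_eq_abs, abs_pow, pow_add, pow_mul, sq_abs]
  calc |sphCoeff n m| * (|x| ^ n * (x ^ 2) ^ m) ≤ 2 ^ n / m ! * (|x| ^ n * (x ^ 2) ^ m) := by
        gcongr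
        exact abs_sphCoeff_le n m
    _ = 2 ^ n * |x| ^ n * ((x ^ 2) ^ m / m !) := by ring

lemma mul_sphBessel_eq_tsum (n : ℕ) (x : ℝ) :
    x * sphBessel n x = ∑' m, sphCoeff n m * x ^ (n + 1 + 2 * m) := by
  rw [sphBessel_eq_tsum, ← tsum_mul_left]
  refine tsum_congr fun m => ?_
  rw [add_right_comm, pow_succ]
  ring

lemma summable_norm_sphCoeff_mul_pow_succ (n : ℕ) (x : ℝ) :
    Summable fun m => ‖sphCoeff n m * x ^ (n + 1 + 2 * m)‖ := by
  refine ((summable_norm_sphCoeff_mul_pow n x).mul_left ‖x‖).congr fun m => ?_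
  rw [add_right_comm, pow_succ, ← norm_mul]
  ring_nf

lemma sphCoeff_mul_pow_shift (n : ℕ) (x : ℝ) (m : ℕ) :
    -2 * ((m + 1 : ℕ) : ℝ) * sphCoeff n (m + 1) * x ^ (n + 2 * (m + 1)) =
      sphCoeff (n + 1) m * x ^ (n + 1 + 1 + 2 * m) := by
  rw [sphCoeff_succ_eq_neg_mul, show n + 2 * (m + 1) = n + 1 + 1 + 2 * m by ring]
  push_cast
  ring

lemma summable_norm_neg_two_mul_sphCoeff_mul_pow (n : ℕ) (x : ℝ) :
    Summable fun m : ℕ => ‖-2 * (m : ℝ) * sphCoeff n m * x ^ (n + 2 * m)‖ := by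
  refine (summable_nat_add_iff 1).mp ?_
  simpa only [sphCoeff_mul_pow_shift] using summable_norm_sphCoeff_mul_pow_succ (n + 1) x

lemma mul_sphBessel_succ_eq_tsum (n : ℕ) (x : ℝ) :
    x * sphBessel (n + 1) x = ∑' m : ℕ, -2 * (m : ℝ) * sphCoeff n m * x ^ (n + 2 * m) := by
  rw [(summable_norm_neg_two_mul_sphCoeff_mul_pow n x).of_norm.tsum_eq_zero_add]
  simp only [sphCoeff_mul_pow_shift, CharP.cast_eq_zero, mul_zero, zero_mul, zero_add]
  exact mul_sphBessel_eq_tsum (n + 1) x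

lemma hasSum_mul_of_summable_norm {a b : ℕ → ℝ} {x : ℝ} {e f d : ℕ} (hd : e + f = d)
    (ha : Summable fun m => ‖a m * x ^ (e + 2 * m)‖)
    (hb : Summable fun m => ‖b m * x ^ (f + 2 * m)‖) :
    HasSum (fun p => (∑ q ∈ antidiagonal p, a q.1 * b q.2) * x ^ (d + 2 * p))
      ((∑' m, a m * x ^ (e + 2 * m)) * ∑' m, b m * x ^ (f + 2 * m)) := by
  have hterm : ∀ p, ∑ q ∈ antidiagonal p, a q.1 * x ^ (e + 2 * q.1) * (b q.2 * x ^ (f + 2 * q.2)) =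
      (∑ q ∈ antidiagonal p, a q.1 * b q.2) * x ^ (d + 2 * p) := fun p => by
    rw [sum_mul]
    refine sum_congr rfl fun q hq => ?_
    rw [← mem_antidiagonal.mp hq, ← hd,
      show e + f + 2 * (q.1 + q.2) = e + 2 * q.1 + (f + 2 * q.2) by ring, pow_add]
    ring
  rw [tsum_mul_tsum_eq_tsum_sum_antidiagonal_of_summable_norm ha hb]
  simpa only [hterm] using
    (summable_norm_sum_mul_antidiagonal_of_summable_norm ha hb).of_norm.hasSum

lemma sphBessel_combination_coeff (l p : ℕ) :
    ∑ q ∈ antidiagonal p, sphCoeff (l + 1) q.1 * (-2 * (q.2 : ℝ) * sphCoeff l q.2) +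
        ∑ q ∈ antidiagonal p, sphCoeff l q.1 * sphCoeff l q.2 -
      2 * (l + 1) * ∑ q ∈ antidiagonal p, sphCoeff (l + 1) q.1 * sphCoeff l q.2 =
    (l + 1) * 4 ^ (l + 1 + p) * FkCoeff (l + 1) p := by
  rw [← sum_antidiagonal_sphCoeff_mul_weighted, mul_sum, ← sum_add_distrib, ← sum_sub_distrib]
  refine sum_congr rfl fun q _ => ?_
  rw [← mul_sphCoeff_succ l q.1]
  ring

theorem F_eq_sphBessel_general (k : ℕ) (hk : 1 ≤ k) (x : ℝ) :
    Fk k (2 * x) =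
      x ^ 2 * sphBessel k x ^ 2 + x ^ 2 * sphBessel (k - 1) x ^ 2 -
        2 * k * x * sphBessel k x * sphBessel (k - 1) x := by
  obtain ⟨l, rfl⟩ : ∃ l, k = l + 1 := ⟨k - 1, by omega⟩
  have h_sq_succ := hasSum_mul_of_summable_norm (d := 2 * (l + 1)) (by ring)
    (summable_norm_sphCoeff_mul_pow_succ (l + 1) x) (summable_norm_neg_two_mul_sphCoeff_mul_pow l x)
  have h_sq := hasSum_mul_of_summable_norm (d := 2 * (l + 1)) (by ring)
    (summable_norm_sphCoeff_mul_pow_succ l x) (summable_norm_sphCoeff_mul_pow_succ l x)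
  have h_mul := hasSum_mul_of_summable_norm (d := 2 * (l + 1)) (by ring)
    (summable_norm_sphCoeff_mul_pow_succ (l + 1) x) (summable_norm_sphCoeff_mul_pow l x)
  rw [← mul_sphBessel_eq_tsum, ← mul_sphBessel_succ_eq_tsum] at h_sq_succ
  rw [← mul_sphBessel_eq_tsum] at h_sq
  rw [← mul_sphBessel_eq_tsum, ← sphBessel_eq_tsum] at h_mul
  rw [Nat.add_sub_cancel, Fk_eq_tsum, ← tsum_mul_left]
  convert ((h_sq_succ.add h_sq).sub (h_mul.mul_left (2 * ((l : ℝ) + 1)))).tsum_eq using 1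
  · refine tsum_congr fun p => ?_
    rw [show 2 * (l + 1) + 2 * p = 2 * (l + 1 + p) by ring, mul_pow, pow_mul, pow_mul,
      show (2 : ℝ) ^ 2 = 4 by norm_num]
    push_cast
    linear_combination (-(x ^ 2) ^ (l + 1 + p)) * sphBessel_combination_coeff l p
  · push_cast
    ring

/-- For integer `k ≥ 1` and real `x ≠ 0`,
`F_k(2x) = x² j_k(x)² + x² j_{k-1}(x)² − 2k x j_k(x) j_{k-1}(x)`. -/
theorem F_eq_sphBessel (k : ℕ) (hk : 1 ≤ k) (x : ℝ) (hx : x ≠ 0) :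
    Fk k (2 * x) =
      x ^ 2 * sphBessel k x ^ 2 + x ^ 2 * sphBessel (k - 1) x ^ 2 -
        2 * k * x * sphBessel k x * sphBessel (k - 1) x :=
  F_eq_sphBessel_general k hk x
end

section
/- For positive integers N and k, the Haar average over N×N unitary matrices U with eigenangles θ_1,…,θ_N of |Z_U(θ_N + β)|^{2k}, where Z_U(θ) = ∏_{n=1}^{N}(1 − e^{i(θ_n−θ)}), satisfies E_N{|Z_U(θ_N+β)|^{2k}} = (1/N) |2 sin(β/2)|^{2k} E_{N−1}{|Z_W(0)|² |Z_W(β)|^{2k}}, where the right expectation is over Haar-random (N−1)×(N−1) unitary matrices W. -/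
open Finset Nat MeasureTheory Real

/-- The Weyl density `∏_{i<j} |e^{iθ_i} − e^{iθ_j}|²` of the eigenangles of a Haar-random
unitary matrix. -/
noncomputable def weylDensity (N : ℕ) (θ : Fin N → ℝ) : ℝ :=
  ∏ i : Fin N, ∏ j ∈ Finset.Ioi i,
    ‖Complex.exp (Complex.I * θ i) - Complex.exp (Complex.I * θ j)‖ ^ 2

/-- The characteristic polynomial `Z(θ; t) = ∏_{m=1}^{N} (1 − e^{i(θ_m − t)})` as a function of
the eigenangles. -/
noncomputable def Zchar (N : ℕ) (θ : Fin N → ℝ) (t : ℝ) : ℂ :=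
  ∏ m : Fin N, (1 - Complex.exp (Complex.I * ((θ m : ℂ) - t)))

/-! Write `θ = (x, t)` with `t = θ_N`. The Vandermonde factors with `j = N` give `|Z_x(t)|²`,
and the factor `m = N` of `Z_θ(t + β)` is `1 - e^{-iβ}`, of modulus `|2 sin(β/2)|`. The
remaining integral over `x` is invariant under the rotation `x ↦ x + t` of the torus, so it
does not depend on `t`, and the integral over `t` contributes the factor `2π`. -/

theorem MeasureTheory.integral_pi_fin_succ_eq_integral_snoc {α E : Type*} [MeasurableSpace α]
    [NormedAddCommGroup E] [NormedSpace ℝ E] (μ : Measure α) [SigmaFinite μ] {n : ℕ}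
    {f : (Fin (n + 1) → α) → E} (hf : Integrable f (Measure.pi fun _ => μ)) :
    ∫ θ, f θ ∂Measure.pi (fun _ => μ)
      = ∫ t, ∫ x, f (Fin.snoc x t) ∂Measure.pi (fun _ => μ) ∂μ := by
  have hmp := (measurePreserving_piFinSuccAbove (fun _ => μ) (Fin.last n)).symm
  have hsnoc : ∀ p : α × (Fin n → α),
      (MeasurableEquiv.piFinSuccAbove (fun _ => α) (Fin.last n)).symm p = Fin.snoc p.2 p.1 := by
    rintro ⟨t, x⟩
    simp [MeasurableEquiv.piFinSuccAbove_symm_apply, Fin.insertNthEquiv, Fin.insertNth_last']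
  rw [← hmp.integral_comp', integral_prod]
  · simp only [hsnoc]
  · exact (hmp.integrable_comp_emb (MeasurableEquiv.measurableEmbedding _)).mpr hf

theorem MeasureTheory.volume_restrict_pi_Icc {ι : Type*} [Fintype ι] (a b : ℝ) :
    volume.restrict (Set.univ.pi fun _ : ι => Set.Icc a b)
      = Measure.pi fun _ => volume.restrict (Set.Ioc a b) := by
  rw [volume_pi, Measure.restrict_pi_pi, restrict_Ioc_eq_restrict_Icc]

namespace AddCircle

variable {T : ℝ} [Fact (0 < T)] {ι E : Type*} [Fintype ι] [NormedAddCommGroup E] [NormedSpace ℝ E]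

theorem integral_pi_comp_coe (a : ℝ) {g : (ι → AddCircle T) → E}
    (hg : AEStronglyMeasurable g) :
    ∫ x, g (fun i => (x i : AddCircle T))
        ∂Measure.pi (fun _ => volume.restrict (Set.Ioc a (a + T))) = ∫ y, g y := by
  have hmp : MeasurePreserving (fun (x : ι → ℝ) i => (x i : AddCircle T))
      (Measure.pi fun _ => volume.restrict (Set.Ioc a (a + T))) volume :=
    measurePreserving_pi _ _ fun _ => AddCircle.measurePreserving_mk T a
  rw [← hmp.map_eq] at hg ⊢
  exact (integral_map hmp.measurable.aemeasurable hg).symm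

theorem integral_pi_comp_add_of_coe_eq (a : ℝ) {f : (ι → ℝ) → E} (hf : StronglyMeasurable f)
    (hper : ∀ x y : ι → ℝ, (∀ i, (x i : AddCircle T) = y i) → f x = f y) (c : ι → ℝ) :
    ∫ x, f (x + c) ∂Measure.pi (fun _ => volume.restrict (Set.Ioc a (a + T)))
      = ∫ x, f x ∂Measure.pi (fun _ => volume.restrict (Set.Ioc a (a + T))) := by
  set g : (ι → AddCircle T) → E := fun y => f fun i => (equivIoc T a (y i) : ℝ)
  have hg : StronglyMeasurable g := hf.comp_measurable <| measurable_pi_lambda _ fun i =>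
    measurable_subtype_coe.comp ((measurableEquivIoc T a).measurable.comp (measurable_pi_apply i))
  have hfg : ∀ x, f x = g fun i => (x i : AddCircle T) := fun x =>
    hper _ _ fun i => by simp
  calc ∫ x, f (x + c) ∂Measure.pi (fun _ => volume.restrict (Set.Ioc a (a + T)))
      = ∫ x, (fun y => g (y + fun i => (c i : AddCircle T))) (fun i => (x i : AddCircle T))
          ∂Measure.pi (fun _ => volume.restrict (Set.Ioc a (a + T))) := by
        simp_rw [hfg]; rfl
    _ = ∫ y, g (y + fun i => (c i : AddCircle T)) :=
        integral_pi_comp_coe a (hg.comp_measurable (measurable_add_const _)).aestronglyMeasurable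
    _ = ∫ y, g y := integral_add_right_eq_self _ _
    _ = ∫ x, f x ∂Measure.pi (fun _ => volume.restrict (Set.Ioc a (a + T))) := by
        rw [← integral_pi_comp_coe a hg.aestronglyMeasurable]; simp_rw [← hfg]

end AddCircle

theorem Complex.exp_I_mul_eq_of_coe_eq {x y : ℝ} (h : (x : AddCircle (2 * π)) = y) :
    Complex.exp (Complex.I * x) = Complex.exp (Complex.I * y) := by
  have := congrArg (fun z => (AddCircle.toCircle z : ℂ)) h
  simpa [AddCircle.toCircle_apply_mk, Circle.coe_exp, mul_comm] using this

lemma Fin.Ioi_castSucc {n : ℕ} (i : Fin n) :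
    Finset.Ioi i.castSucc = Finset.cons (Fin.last n) ((Finset.Ioi i).map Fin.castSuccEmb)
      (by simp) := by
  ext j
  induction j using Fin.lastCases <;> simp [Fin.castSucc_lt_last, Fin.le_last]

theorem weylDensity_snoc (n : ℕ) (x : Fin n → ℝ) (t : ℝ) :
    weylDensity (n + 1) (Fin.snoc x t) = weylDensity n x * ‖Zchar n x t‖ ^ 2 := by
  have hlast : Finset.Ioi (Fin.last n) = ∅ := by ext j; simp [Fin.le_last]
  simp only [weylDensity, Zchar, Fin.prod_univ_castSucc, hlast, Finset.prod_empty, mul_one,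
    Fin.Ioi_castSucc, Finset.prod_cons, Finset.prod_map, norm_prod, ← Finset.prod_pow,
    ← Finset.prod_mul_distrib]
  refine Finset.prod_congr rfl fun i _ => ?_
  simp only [Fin.castSuccEmb_apply, Fin.snoc_castSucc, Fin.snoc_last, mul_comm]
  congr 1
  have : Complex.exp (Complex.I * x i) - Complex.exp (Complex.I * t)
      = -(Complex.exp (Complex.I * t) * (1 - Complex.exp (Complex.I * (x i - t)))) := by
    rw [mul_sub, mul_one, ← Complex.exp_add]
    ring_nf
  rw [this, norm_neg, norm_mul, Complex.norm_exp_I_mul_ofReal, one_mul]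

theorem Zchar_snoc (n : ℕ) (x : Fin n → ℝ) (t s : ℝ) :
    Zchar (n + 1) (Fin.snoc x t) s = Zchar n x s * (1 - Complex.exp (Complex.I * (t - s))) := by
  simp [Zchar, Fin.prod_univ_castSucc]

theorem weylDensity_add_const (n : ℕ) (x : Fin n → ℝ) (t : ℝ) :
    weylDensity n (x + fun _ => t) = weylDensity n x := by
  refine Finset.prod_congr rfl fun i _ => Finset.prod_congr rfl fun j _ => ?_
  simp only [Pi.add_apply, Complex.ofReal_add, mul_add, Complex.exp_add, ← sub_mul, norm_mul,
    Complex.norm_exp_I_mul_ofReal, mul_one]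

theorem Zchar_add_const (n : ℕ) (x : Fin n → ℝ) (t s : ℝ) :
    Zchar n (x + fun _ => t) s = Zchar n x (s - t) := by
  refine Finset.prod_congr rfl fun m _ => ?_
  simp only [Pi.add_apply, Complex.ofReal_add, Complex.ofReal_sub]
  ring_nf

theorem weylDensity_congr {n : ℕ} {x y : Fin n → ℝ}
    (h : ∀ i, (x i : AddCircle (2 * π)) = y i) : weylDensity n x = weylDensity n y := by
  simp only [weylDensity, Complex.exp_I_mul_eq_of_coe_eq (h _)]

theorem Zchar_congr {n : ℕ} {x y : Fin n → ℝ}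
    (h : ∀ i, (x i : AddCircle (2 * π)) = y i) (s : ℝ) : Zchar n x s = Zchar n y s := by
  simp only [Zchar, mul_sub, Complex.exp_sub, Complex.exp_I_mul_eq_of_coe_eq (h _)]

@[fun_prop]
theorem continuous_weylDensity (n : ℕ) : Continuous (weylDensity n) := by
  unfold weylDensity; fun_prop

@[fun_prop]
theorem Continuous.Zchar {α : Type*} [TopologicalSpace α] (n : ℕ) {f : α → Fin n → ℝ}
    {g : α → ℝ} (hf : Continuous f) (hg : Continuous g) :
    Continuous fun a => Zchar n (f a) (g a) := by
  unfold _root_.Zchar; fun_prop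

theorem integral_weylDensity_mul_norm_Zchar_add_const (n p q : ℕ) (s s' t : ℝ) :
    ∫ x, weylDensity n x * ‖Zchar n x (s + t)‖ ^ p * ‖Zchar n x (s' + t)‖ ^ q
        ∂Measure.pi (fun _ => volume.restrict (Set.Ioc (-π) π))
      = ∫ x, weylDensity n x * ‖Zchar n x s‖ ^ p * ‖Zchar n x s'‖ ^ q
        ∂Measure.pi (fun _ => volume.restrict (Set.Ioc (-π) π)) := by
  have : Fact (0 < 2 * π) := ⟨two_pi_pos⟩
  have hcont : Continuous fun x =>
      weylDensity n x * ‖Zchar n x (s + t)‖ ^ p * ‖Zchar n x (s' + t)‖ ^ q := by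
    fun_prop
  have hinv := AddCircle.integral_pi_comp_add_of_coe_eq (T := 2 * π) (-π)
    hcont.stronglyMeasurable (fun x y h => by simp only [weylDensity_congr h, Zchar_congr h])
    (fun _ => t)
  rw [show -π + 2 * π = π by ring] at hinv
  simpa only [weylDensity_add_const, Zchar_add_const, add_sub_cancel_right] using hinv.symm

theorem haar_average_factorization_general (n k : ℕ) (β : ℝ) :
    (1 / ((n + 1)! * (2 * Real.pi) ^ (n + 1))) *
      ∫ θ in Set.univ.pi fun _ : Fin (n + 1) => Set.Icc (-Real.pi) Real.pi,
        weylDensity (n + 1) θ *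
          ‖Zchar (n + 1) θ (θ (Fin.last n) + β)‖ ^ (2 * k)
    = (1 / (n + 1 : ℝ)) * |2 * Real.sin (β / 2)| ^ (2 * k) *
      ((1 / (n ! * (2 * Real.pi) ^ n)) *
        ∫ x in Set.univ.pi fun _ : Fin n => Set.Icc (-Real.pi) Real.pi,
          weylDensity n x * ‖Zchar n x 0‖ ^ 2 *
            ‖Zchar n x β‖ ^ (2 * k)) := by
  have hgap (t : ℝ) : ‖1 - Complex.exp (Complex.I * (t - (t + β) : ℝ))‖ = |2 * sin (β / 2)| := by
    rw [norm_sub_rev, Complex.norm_exp_I_mul_ofReal_sub_one, Real.norm_eq_abs,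
      show (t - (t + β)) / 2 = -(β / 2) by ring, sin_neg, mul_neg, abs_neg]
  have hsplit (t : ℝ) (x : Fin n → ℝ) :
      weylDensity (n + 1) (Fin.snoc x t) * ‖Zchar (n + 1) (Fin.snoc x t) (t + β)‖ ^ (2 * k)
        = |2 * sin (β / 2)| ^ (2 * k) *
          (weylDensity n x * ‖Zchar n x (0 + t)‖ ^ 2 * ‖Zchar n x (β + t)‖ ^ (2 * k)) := by
    rw [weylDensity_snoc, Zchar_snoc, norm_mul, ← Complex.ofReal_sub, hgap, zero_add, add_comm β]
    ring
  have hint : Integrable (fun θ => weylDensity (n + 1) θ *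
      ‖Zchar (n + 1) θ (θ (Fin.last n) + β)‖ ^ (2 * k))
      (Measure.pi fun _ => volume.restrict (Set.Ioc (-π) π)) := by
    rw [← volume_restrict_pi_Icc]
    exact ContinuousOn.integrableOn_compact (isCompact_univ_pi fun _ => isCompact_Icc)
      (Continuous.continuousOn (by fun_prop))
  rw [volume_restrict_pi_Icc, volume_restrict_pi_Icc,
    integral_pi_fin_succ_eq_integral_snoc _ hint]
  simp only [Fin.snoc_last, hsplit, integral_const_mul,
    integral_weylDensity_mul_norm_Zchar_add_const, integral_const,
    measureReal_restrict_apply_univ, Real.volume_real_Ioc, smul_eq_mul]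
  rw [max_eq_left (by linarith [pi_pos]), Nat.factorial_succ]
  push_cast
  field_simp
  ring

/-- For positive integers `N = n+1` and `k`, the Haar (Weyl-integral) average of
`|Z_U(θ_N + β)|^{2k}` over `U(N)` factors as
`(1/N) |2 sin(β/2)|^{2k}` times the Haar average over `U(N−1)` of `|Z_W(0)|² |Z_W(β)|^{2k}`. -/
theorem haar_average_factorization (n k : ℕ) (hk : 1 ≤ k) (β : ℝ) :
    (1 / ((n + 1)! * (2 * Real.pi) ^ (n + 1))) *
      ∫ θ in Set.univ.pi fun _ : Fin (n + 1) => Set.Icc (-Real.pi) Real.pi,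
        weylDensity (n + 1) θ *
          ‖Zchar (n + 1) θ (θ (Fin.last n) + β)‖ ^ (2 * k)
    = (1 / (n + 1 : ℝ)) * |2 * Real.sin (β / 2)| ^ (2 * k) *
      ((1 / (n ! * (2 * Real.pi) ^ n)) *
        ∫ x in Set.univ.pi fun _ : Fin n => Set.Icc (-Real.pi) Real.pi,
          weylDensity n x * ‖Zchar n x 0‖ ^ 2 *
            ‖Zchar n x β‖ ^ (2 * k)) :=
  haar_average_factorization_general n k β
end

section
/- The power series ∑_{j=1}^∞ (-1)^{j+1} (2j² + 5j) z^{2j+2} / (2j+6)! , evaluated at z = 2πα, satisfies (4/π²) ∑_{j=1}^∞ (-1)^{j+1} (2πα)^{2j+2} (2j²+5j)/(2j+6)! = (6/π⁴) · ((2π²α² − 3) sin²(πα) + 3πα sin(2πα) + (πα)⁴ − 3(πα)²) / (12 (πα)⁴) · π², i.e. equals (1/(2π²)) · ((2x² − 3) sin²x + 3x sin(2x) + x⁴ − 3x²)/x⁴ with x = πα, for all real α ≠ 0. -/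
/-!
Since `2j² + 5j = (2j+5)(2j+6)/2 - 3(2j+6) + 3`, the `j`-th term of the series splits into
terms of the Taylor series of `cos` and `sin` with denominators `(2j+4)!`, `(2j+5)!`, `(2j+6)!`,
so the series is a combination of tails of these Taylor series. It sums to
`((3 - y²/2) cos y + 3 y sin y + y⁴/8 - y² - 3) / y⁴`, and at `y = 2πα` the double angle
formulas turn this into the right-hand side.
-/

open Nat

namespace Real

theorem hasSum_cos_tail (y : ℝ) (k : ℕ) :
    HasSum (fun j : ℕ => (-1 : ℝ) ^ (j + k) * y ^ (2 * (j + k)) / (2 * (j + k))!)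
      (cos y - ∑ i ∈ Finset.range k, (-1 : ℝ) ^ i * y ^ (2 * i) / (2 * i)!) :=
  (hasSum_nat_add_iff' k).2 (hasSum_cos y)

theorem hasSum_sin_tail (y : ℝ) (k : ℕ) :
    HasSum (fun j : ℕ => (-1 : ℝ) ^ (j + k) * y ^ (2 * (j + k) + 1) / (2 * (j + k) + 1)!)
      (sin y - ∑ i ∈ Finset.range k, (-1 : ℝ) ^ i * y ^ (2 * i + 1) / (2 * i + 1)!) :=
  (hasSum_nat_add_iff' k).2 (hasSum_sin y)

end Real

noncomputable def cggTerm (y : ℝ) (j : ℕ) : ℝ :=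
  (-1 : ℝ) ^ (j + 1 + 1) * y ^ (2 * (j + 1) + 2) *
    (2 * (j + 1 : ℕ) ^ 2 + 5 * (j + 1 : ℕ)) / (2 * (j + 1) + 6)!

theorem cggTerm_eq {y : ℝ} (hy : y ≠ 0) (j : ℕ) :
    cggTerm y j
      = -1 / (2 * y ^ 2) * ((-1 : ℝ) ^ (j + 3) * y ^ (2 * (j + 3)) / (2 * (j + 3))!)
        + 3 / y ^ 3 * ((-1 : ℝ) ^ (j + 3) * y ^ (2 * (j + 3) + 1) / (2 * (j + 3) + 1)!)
        + 3 / y ^ 4 * ((-1 : ℝ) ^ (j + 4) * y ^ (2 * (j + 4)) / (2 * (j + 4))!) := by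
  have hpow : 2 * (j + 1) + 2 = 2 * j + 4 := by omega
  have h8 : 2 * (j + 1) + 6 = 2 * j + 5 + 1 + 1 + 1 := by omega
  have h8' : 2 * (j + 4) = 2 * j + 5 + 1 + 1 + 1 := by omega
  have h7 : 2 * (j + 3) + 1 = 2 * j + 5 + 1 + 1 := by omega
  have h6 : 2 * (j + 3) = 2 * j + 5 + 1 := by omega
  have hfact : ((2 * j + 5)! : ℝ) ≠ 0 := by exact_mod_cast (2 * j + 5).factorial_ne_zero
  rw [cggTerm, hpow, h8, h8', h7, h6, factorial_succ, factorial_succ, factorial_succ]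
  push_cast
  field_simp
  ring

theorem hasSum_cggTerm {y : ℝ} (hy : y ≠ 0) :
    HasSum (cggTerm y)
      (((3 - y ^ 2 / 2) * Real.cos y + 3 * y * Real.sin y + y ^ 4 / 8 - y ^ 2 - 3) / y ^ 4) := by
  rw [funext (cggTerm_eq hy)]
  refine (congrArg (HasSum _) ?_).mp ((((Real.hasSum_cos_tail y 3).mul_left (-1 / (2 * y ^ 2))).add
    ((Real.hasSum_sin_tail y 3).mul_left (3 / y ^ 3))).add
    ((Real.hasSum_cos_tail y 4).mul_left (3 / y ^ 4)))
  norm_num [Finset.sum_range_succ, factorial]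
  field_simp
  ring

/-- For all real `α ≠ 0`, with `x = πα`,
`(4/π²) ∑_{j=1}^∞ (-1)^{j+1} (2πα)^{2j+2} (2j²+5j)/(2j+6)!
  = (1/(2π²)) ((2x²−3) sin²x + 3x sin(2x) + x⁴ − 3x²)/x⁴`. -/
theorem cgg_series_identity (α : ℝ) (hα : α ≠ 0) :
    (4 / Real.pi ^ 2) *
      ∑' j : ℕ,
        (-1 : ℝ) ^ (j + 1 + 1) * (2 * Real.pi * α) ^ (2 * (j + 1) + 2) *
          (2 * (j + 1 : ℕ) ^ 2 + 5 * (j + 1 : ℕ)) / (2 * (j + 1) + 6)!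
    = (1 / (2 * Real.pi ^ 2)) *
        ((2 * (Real.pi * α) ^ 2 - 3) * Real.sin (Real.pi * α) ^ 2 +
            3 * (Real.pi * α) * Real.sin (2 * (Real.pi * α)) +
            (Real.pi * α) ^ 4 - 3 * (Real.pi * α) ^ 2) /
          (Real.pi * α) ^ 4 := by
  set x := Real.pi * α
  have hx : x ≠ 0 := mul_ne_zero Real.pi_ne_zero hα
  have hy : 2 * Real.pi * α = 2 * x := mul_assoc _ _ _
  have htsum := (hasSum_cggTerm (mul_ne_zero two_ne_zero hx)).tsum_eq
  unfold cggTerm at htsum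
  rw [hy, htsum, Real.cos_two_mul, Real.sin_two_mul, Real.sin_sq]
  field_simp
  ring
end
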